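/- arXiv:1402.1387 — 3 statements merged into one kernel-verified Lean document; each statement's English description precedes it below -/
import Mathlib

section
/- Over F_9 = F_3(δ) with δ² + 2δ + 2 = 0, the set S_0 = F_3 = {0, 1, 2} ⊆ F_9 satisfies: (1) every root of T² - T + 1 lies in S_0; (2) every root of T lies in S_0; (3) for every γ ∈ S_0, every root (in an algebraic closure of F_9) of the polynomial σ_γ(T) = T(γ² + 1) - (T² + 1) lies in S_0. -/
/-- Over `F_9 = F_3(δ)` with `δ² + 2δ + 2 = 0`, the set `S₀ = {0,1,2}` contains all roots of
`T² - T + 1`, all roots of `T`, and all roots of `σ_γ(T) = T(γ²+1) - (T²+1)` for each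
`γ ∈ S₀`, roots taken in an algebraic closure of `F_9`. -/
theorem stmt_2 (F : Type*) [Field F] [Fintype F] (hcard : Fintype.card F = 9)
    [CharP F 3] (δ : F) (hδ : δ ^ 2 + 2 * δ + 2 = 0) :
    let K := AlgebraicClosure F
    let S0 : Set K := {0, 1, 2}
    (∀ x : K, x ^ 2 - x + 1 = 0 → x ∈ S0) ∧
    (∀ x : K, x = 0 → x ∈ S0) ∧
    (∀ γ ∈ S0, ∀ x : K, x * (γ ^ 2 + 1) - (x ^ 2 + 1) = 0 → x ∈ S0) := by
  intro K S0
  have hK : CharP K 3 := charP_of_injective_algebraMap (algebraMap F K).injective 3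
  have h3 : (3 : K) = 0 := CharP.cast_eq_zero K 3
  have key1 : ∀ x : K, x ^ 2 - x + 1 = 0 → x ∈ S0 := by
    intro x hx
    have h : (x + 1) ^ 2 = 0 := by linear_combination hx + x * h3
    have hx1 : x + 1 = 0 := pow_eq_zero_iff (n := 2) (by norm_num) |>.mp h
    right; right
    show x = 2
    linear_combination hx1 - h3
  refine ⟨key1, ?_, ?_⟩
  · intro x hx; left; exact hx
  · intro γ hγ x hx
    rcases hγ with h0 | h1 | h2
    · have hγ0 : γ = 0 := h0
      rw [hγ0] at hx
      apply key1
      linear_combination -hx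
    · have hγ1 : γ = (1 : K) := h1
      have h : (x - 1) ^ 2 = 0 := by
        rw [hγ1] at hx; linear_combination -hx
      have : x - 1 = 0 := pow_eq_zero_iff (n := 2) (by norm_num) |>.mp h
      right; left; linear_combination this
    · have hγ2 : γ = (2 : K) := h2
      have h : (x - 1) ^ 2 = 0 := by
        rw [hγ2] at hx; linear_combination -hx + x * h3
      have : x - 1 = 0 := pow_eq_zero_iff (n := 2) (by norm_num) |>.mp h
      right; left; linear_combination this
end

section
/- Over F_9 = F_3(δ) with δ² + 2δ + 2 = 0, the set S_0 = {0, 1, 2, δ, δ³, δ⁵, δ⁷} satisfies: (1) every root of T² - T is in S_0; (2) every root of T + 1 is in S_0; (3) for every γ ∈ S_0, every root of σ_γ(T) = (T + 1)(γ² + 1) - (T² + 1) (in an algebraic closure of F_9) lies in S_0. -/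
/-- Over `F_9 = F_3(δ)` with `δ² + 2δ + 2 = 0`, the set
`S₀ = {0, 1, 2, δ, δ³, δ⁵, δ⁷}` contains all roots of `T² - T`, all roots of `T + 1`,
and all roots of `σ_γ(T) = (T+1)(γ²+1) - (T²+1)` for each `γ ∈ S₀`,
roots taken in an algebraic closure of `F_9`. -/
theorem stmt_3 (F : Type*) [Field F] [Fintype F] (hcard : Fintype.card F = 9)
    [CharP F 3] (δ : F) (hδ : δ ^ 2 + 2 * δ + 2 = 0) :
    let K := AlgebraicClosure F
    let d : K := algebraMap F K δ
    let S0 : Set K := {0, 1, 2, d, d ^ 3, d ^ 5, d ^ 7}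
    (∀ x : K, x ^ 2 - x = 0 → x ∈ S0) ∧
    (∀ x : K, x + 1 = 0 → x ∈ S0) ∧
    (∀ γ ∈ S0, ∀ x : K, (x + 1) * (γ ^ 2 + 1) - (x ^ 2 + 1) = 0 → x ∈ S0) := by
  intro K d S0
  have h3 : (3 : K) = 0 := by
    have h : ((3 : ℕ) : F) = 0 := CharP.cast_eq_zero F 3
    have h2 := congrArg (algebraMap F K) h
    rw [map_natCast, map_zero] at h2
    exact_mod_cast h2
  have hd : d ^ 2 + 2 * d + 2 = 0 := by
    have h2 := congrArg (algebraMap F K) hδ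
    simpa [map_add, map_mul, map_pow, map_ofNat, d] using h2
  have hd2 : d ^ 2 - d - 1 = 0 := by linear_combination hd - (d + 1) * h3
  have mem : ∀ x : K,
      (x = 0 ∨ x = 1 ∨ x = 2 ∨ x = d ∨ x = d ^ 3 ∨ x = d ^ 5 ∨ x = d ^ 7) → x ∈ S0 := by
    intro x hx
    simp only [S0, Set.mem_insert_iff, Set.mem_singleton_iff]
    exact hx
  refine ⟨?_, ?_, ?_⟩
  · intro x hx
    have h : x * (x - 1) = 0 := by linear_combination hx
    rcases mul_eq_zero.mp h with h | h
    · exact mem x (Or.inl h)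
    · exact mem x (Or.inr (Or.inl (by linear_combination h)))
  · intro x hx
    exact mem x (Or.inr (Or.inr (Or.inl (by linear_combination hx - h3))))
  · intro γ hγ x hx
    simp only [S0, Set.mem_insert_iff, Set.mem_singleton_iff] at hγ
    rcases hγ with rfl | rfl | rfl | rfl | rfl | rfl | rfl
    · -- γ = 0
      have h : x * (x - 1) = 0 := by linear_combination -hx
      rcases mul_eq_zero.mp h with h | h
      · exact mem x (Or.inl h)
      · exact mem x (Or.inr (Or.inl (by linear_combination h)))
    · -- γ = 1
      have h : (x - d ^ 5) * (x - d ^ 7) = 0 := by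
        linear_combination -hx + (-1 + x + d - d*x + d^2 - d^2*x + d^4 - d^4*x - d^5 - d^5*x
          - d^6 - d^8 + d^9 + d^10)*hd2 + (x + d^2 - d^2*x - d^5*x - d^6 + d^10)*h3
      rcases mul_eq_zero.mp h with h | h
      · exact mem x (Or.inr (Or.inr (Or.inr (Or.inr (Or.inr (Or.inl (by linear_combination h)))))))
      · exact mem x (Or.inr (Or.inr (Or.inr (Or.inr (Or.inr (Or.inr (by linear_combination h)))))))
    · -- γ = 2
      have h : (x - d ^ 5) * (x - d ^ 7) = 0 := by
        linear_combination -hx + (-1 + x + d - d*x + d^2 - d^2*x + d^4 - d^4*x - d^5 - d^5*x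
          - d^6 - d^8 + d^9 + d^10)*hd2 + (1 + 2*x + d^2 - d^2*x - d^5*x - d^6 + d^10)*h3
      rcases mul_eq_zero.mp h with h | h
      · exact mem x (Or.inr (Or.inr (Or.inr (Or.inr (Or.inr (Or.inl (by linear_combination h)))))))
      · exact mem x (Or.inr (Or.inr (Or.inr (Or.inr (Or.inr (Or.inr (by linear_combination h)))))))
    · -- γ = d
      have h : (x - d ^ 3) ^ 2 = 0 := by
        linear_combination -hx + (-x + d*x - d^2 + d^3 + d^4)*hd2 + (d^2*x - d^3*x + d^4)*h3
      have h' := pow_eq_zero_iff (n := 2) (by norm_num) |>.mp h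
      exact mem x (Or.inr (Or.inr (Or.inr (Or.inr (Or.inl (by linear_combination h'))))))
    · -- γ = d ^ 3
      have h : (x - d) ^ 2 = 0 := by
        linear_combination -hx + (-x - d^2 - d^2*x + d^3 + d^3*x + d^4 + d^4*x)*hd2
          + (-d*x + d^4 + d^4*x)*h3
      have h' := pow_eq_zero_iff (n := 2) (by norm_num) |>.mp h
      exact mem x (Or.inr (Or.inr (Or.inr (Or.inl (by linear_combination h')))))
    · -- γ = d ^ 5
      have h : (x - d ^ 3) ^ 2 = 0 := by
        linear_combination -hx + (-x + d*x + d^2*x - d^3*x - d^4*x - d^6 - d^6*x + d^7 + d^7*x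
          + d^8 + d^8*x)*hd2 + (d^2*x - d^3*x - d^4*x + d^8 + d^8*x)*h3
      have h' := pow_eq_zero_iff (n := 2) (by norm_num) |>.mp h
      exact mem x (Or.inr (Or.inr (Or.inr (Or.inr (Or.inl (by linear_combination h'))))))
    · -- γ = d ^ 7
      have h : (x - d) ^ 2 = 0 := by
        linear_combination -hx + (-x - d^2 - d^2*x + d^3 + d^3*x + d^4 + d^4*x + d^6 + d^6*x
          - d^7 - d^7*x - d^8 - d^8*x - d^10 - d^10*x + d^11 + d^11*x + d^12 + d^12*x)*hd2
          + (-d*x + d^4 + d^4*x - d^8 - d^8*x + d^12 + d^12*x)*h3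
      have h' := pow_eq_zero_iff (n := 2) (by norm_num) |>.mp h
      exact mem x (Or.inr (Or.inr (Or.inr (Or.inl (by linear_combination h')))))
end

section
/- Let F_25 = F_5(δ) with δ² + 4δ + 2 = 0. Then T² + 4 splits into linear factors over F_25, and the set S_0 = {0, 2δ+4, 4δ+3, δ+2, 3δ+1} ⊆ F_25 satisfies: (1) every root of T² - (δ+2)T lies in S_0; (2) every root of (δ+2)T + 1 lies in S_0; (3) for every γ ∈ S_0, every root of σ_γ(T) = ((δ+2)T + 1)(γ² + 4) - (T² + 4) in an algebraic closure of F_25 lies in S_0. -/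
/-!
Since `5 = 0`, `T² + 4 = (T + 1)(T + 4)`, and `δ² = δ + 3` reduces every expression in `δ` to the
form `aδ + b`. With that, each polynomial in question is, up to a nonzero constant, a product of
linear factors `T - r` with `r ∈ S₀`; for `γ ≠ 0` in `S₀` the quadratic `σ_γ` is even a square.
-/

open Polynomial

theorem X_sq_add_four_eq_mul {R : Type*} [CommRing R] [CharP R 5] :
    (X ^ 2 + 4 : R[X]) = (X + C 1) * (X + C 4) := by
  rw [map_one, map_ofNat]
  linear_combination (-X) * CharP.ofNat_eq_zero R[X] 5

theorem splits_X_sq_add_four {R : Type*} [CommRing R] [CharP R 5] :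
    (X ^ 2 + 4 : R[X]).Splits := by
  rw [X_sq_add_four_eq_mul]
  exact (Splits.X_add_C 1).mul (Splits.X_add_C 4)

theorem mem_of_mul_sub_eq_zero {R : Type*} [Ring R] [NoZeroDivisors R] {S : Set R} {r s x : R}
    (hr : r ∈ S) (hs : s ∈ S) (h : (x - r) * (x - s) = 0) : x ∈ S := by
  rcases mul_eq_zero.mp h with h | h
  · rwa [sub_eq_zero.mp h]
  · rwa [sub_eq_zero.mp h]

namespace KummerTowerF25

variable {K : Type*} [Field K] {d : K}

def S0 (d : K) : Set K := {0, 2 * d + 4, 4 * d + 3, d + 2, 3 * d + 1}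

theorem mem_S0_of_sq_sub_mul_eq_zero {x : K} (hx : x ^ 2 - (d + 2) * x = 0) : x ∈ S0 d :=
  mem_of_mul_sub_eq_zero (r := 0) (s := d + 2) (by simp [S0]) (by simp [S0])
    (by linear_combination hx)

variable [CharP K 5]

theorem sq_eq_add_three (hd : d ^ 2 + 4 * d + 2 = 0) : d ^ 2 = d + 3 := by
  linear_combination hd - (d + 1) * CharP.ofNat_eq_zero K 5

theorem add_two_ne_zero (hd : d ^ 2 + 4 * d + 2 = 0) : d + 2 ≠ 0 := by
  intro h
  have : (1 : K) = 0 := by linear_combination 2 * hd - 2 * (d + 2) * h + CharP.ofNat_eq_zero K 5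
  exact one_ne_zero this

theorem mem_S0_of_mul_add_one_eq_zero (hd : d ^ 2 + 4 * d + 2 = 0) {x : K}
    (hx : (d + 2) * x + 1 = 0) : x ∈ S0 d := by
  have : (d + 2) * (x - (2 * d + 4)) = 0 := by
    linear_combination hx - 2 * hd - CharP.ofNat_eq_zero K 5
  rw [sub_eq_zero.mp ((mul_eq_zero.mp this).resolve_left (add_two_ne_zero hd))]
  simp [S0]

theorem exists_sigma_eq_neg_mul (hd : d ^ 2 + 4 * d + 2 = 0) {γ : K} (hγ : γ ∈ S0 d) :
    ∃ r ∈ S0 d, ∃ s ∈ S0 d, ∀ x : K,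
      ((d + 2) * x + 1) * (γ ^ 2 + 4) - (x ^ 2 + 4) = -((x - r) * (x - s)) := by
  have e := sq_eq_add_three hd
  have h5 : (5 : K) = 0 := CharP.ofNat_eq_zero K 5
  simp only [S0, Set.mem_insert_iff, Set.mem_singleton_iff] at hγ
  rcases hγ with rfl | rfl | rfl | rfl | rfl
  · refine ⟨0, by simp [S0], 4 * d + 3, by simp [S0], fun x => ?_⟩
    linear_combination x * h5
  · refine ⟨d + 2, by simp [S0], d + 2, by simp [S0], fun x => ?_⟩
    linear_combination (5 + 28 * x + 4 * d * x) * e + (7 + 24 * x + 5 * d + 18 * d * x) * h5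
  · refine ⟨3 * d + 1, by simp [S0], 3 * d + 1, by simp [S0], fun x => ?_⟩
    linear_combination (25 + 72 * x + 16 * d * x) * e + (17 + 48 * x + 11 * d + 35 * d * x) * h5
  · refine ⟨3 * d + 1, by simp [S0], 3 * d + 1, by simp [S0], fun x => ?_⟩
    linear_combination (10 + 7 * x + d * x) * e + (7 + 7 * x + 4 * d + 4 * d * x) * h5
  · refine ⟨d + 2, by simp [S0], d + 2, by simp [S0], fun x => ?_⟩
    linear_combination (10 + 33 * x + 9 * d * x) * e + (7 + 21 * x + 4 * d + 15 * d * x) * h5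

theorem mem_S0_of_sigma_eq_zero (hd : d ^ 2 + 4 * d + 2 = 0) {γ : K} (hγ : γ ∈ S0 d) {x : K}
    (hx : ((d + 2) * x + 1) * (γ ^ 2 + 4) - (x ^ 2 + 4) = 0) : x ∈ S0 d := by
  obtain ⟨r, hr, s, hs, hσ⟩ := exists_sigma_eq_neg_mul hd hγ
  exact mem_of_mul_sub_eq_zero hr hs (neg_eq_zero.mp (hσ x ▸ hx))

end KummerTowerF25

open KummerTowerF25 in
theorem stmt_5_general (F : Type*) [Field F]
    [CharP F 5] (δ : F) (hδ : δ ^ 2 + 4 * δ + 2 = 0) :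
    (Polynomial.X ^ 2 + 4 : Polynomial F).Splits ∧
    (let K := AlgebraicClosure F
     let d : K := algebraMap F K δ
     let S0 : Set K := {0, 2 * d + 4, 4 * d + 3, d + 2, 3 * d + 1}
     (∀ x : K, x ^ 2 - (d + 2) * x = 0 → x ∈ S0) ∧
     (∀ x : K, (d + 2) * x + 1 = 0 → x ∈ S0) ∧
     (∀ γ ∈ S0, ∀ x : K, ((d + 2) * x + 1) * (γ ^ 2 + 4) - (x ^ 2 + 4) = 0 → x ∈ S0)) := by
  refine ⟨splits_X_sq_add_four, ?_⟩
  have hd : (algebraMap F (AlgebraicClosure F) δ) ^ 2 + 4 * algebraMap F _ δ + 2 = 0 := by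
    simpa [map_ofNat] using congrArg (algebraMap F (AlgebraicClosure F)) hδ
  exact ⟨fun _ => mem_S0_of_sq_sub_mul_eq_zero, fun _ => mem_S0_of_mul_add_one_eq_zero hd,
    fun _ hγ _ => mem_S0_of_sigma_eq_zero hd hγ⟩

/-- Over `F_25 = F_5(δ)` with `δ² + 4δ + 2 = 0`, the polynomial `T² + 4` splits over
`F_25`, and `S₀ = {0, 2δ+4, 4δ+3, δ+2, 3δ+1}` contains all roots of `T² - (δ+2)T`,
all roots of `(δ+2)T + 1`, and all roots of
`σ_γ(T) = ((δ+2)T + 1)(γ²+4) - (T²+4)` for each `γ ∈ S₀`, roots in an algebraic closure. -/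
theorem stmt_5 (F : Type*) [Field F] [Fintype F] (hcard : Fintype.card F = 25)
    [CharP F 5] (δ : F) (hδ : δ ^ 2 + 4 * δ + 2 = 0) :
    (Polynomial.X ^ 2 + 4 : Polynomial F).Splits ∧
    (let K := AlgebraicClosure F
     let d : K := algebraMap F K δ
     let S0 : Set K := {0, 2 * d + 4, 4 * d + 3, d + 2, 3 * d + 1}
     (∀ x : K, x ^ 2 - (d + 2) * x = 0 → x ∈ S0) ∧
     (∀ x : K, (d + 2) * x + 1 = 0 → x ∈ S0) ∧
     (∀ γ ∈ S0, ∀ x : K, ((d + 2) * x + 1) * (γ ^ 2 + 4) - (x ^ 2 + 4) = 0 → x ∈ S0)) :=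
  stmt_5_general F δ hδ
end
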